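/- Let (d_{n,k}) = (g; f_1,…,f_ℓ) be a multiple Riordan array over ℝ and let (d̂_{n,k})_{n,k≥0} be its compression (with d̂_{n,k} = 0 for k > n). If the coefficient sequence (g_k)_{k≥0} of ĝ and, for each i = 1,…,ℓ, the coefficient sequence (f_{i,k})_{k≥0} of f̂_i are Pólya frequency sequences — i.e. the Toeplitz matrices (g_{p−q})_{p,q≥0} and (f_{i,p−q})_{p,q≥0} (entries with negative subscript set to 0) are totally positive — then the matrix (d̂_{n,k})_{n,k≥0} is totally positive: for every r ≥ 1 and all strictly increasing indices n_1 < ⋯ < n_r and k_1 < ⋯ < k_r, det( d̂_{n_a, k_b} )_{1≤a,b≤r} ≥ 0. -/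

import Mathlib

/-! The hypotheses say that `g(t) = ĝ(t^ℓ)` and `f_i(t) = t φ_i(t^ℓ)` with `f̂_i = t φ_i`. Hence
column `k` of the compression has generating function `ĝ f̂_0 f̂_1 ⋯ f̂_{k-1}` (indices of the `f̂`
taken mod `ℓ`), so the compression factors as `T(ĝ) N`, with `T(ĝ)` the Toeplitz matrix of `ĝ` and
`N` the matrix whose columns are the products `f̂_0 ⋯ f̂_{k-1}`. In turn `N = 1 ⊕ T(φ_0) N'`, where
`N'` is built in the same way from `f̂_1, f̂_2, …`. By Cauchy–Binet, products of totally positive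
matrices with a lower triangular left factor are totally positive, and so is `1 ⊕ Q` whenever `Q`
is; an induction on the number of columns shows that `N` is totally positive. -/

open PowerSeries Finset

/-- Entry `d_{n,k}` of the multiple Riordan array `(g; f_0, …, f_{ℓ-1})`. -/
noncomputable def mrEntry {K : Type*} [CommRing K] (ℓ : ℕ) (g : K⟦X⟧) (f : ℕ → K⟦X⟧)
    (n k : ℕ) : K :=
  coeff n (g * (∏ i ∈ Finset.range (k % ℓ), f i) * (∏ i ∈ Finset.range ℓ, f i) ^ (k / ℓ))

/-- An infinite real matrix is totally positive if every minor with strictly increasing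
row and column indices is nonnegative. -/
def IsTotallyPositive (M : ℕ → ℕ → ℝ) : Prop :=
  ∀ (r : ℕ) (rows cols : Fin r → ℕ), StrictMono rows → StrictMono cols →
    0 ≤ (Matrix.of fun a b => M (rows a) (cols b)).det

/-- The Toeplitz matrix of a sequence (entries with negative subscript set to `0`). -/
def toeplitzOf (c : ℕ → ℝ) : ℕ → ℕ → ℝ := fun p q => if q ≤ p then c (p - q) else 0

/-- A real sequence is a Pólya frequency sequence if its Toeplitz matrix is totally
positive. -/
def IsPolyaFrequency (c : ℕ → ℝ) : Prop := IsTotallyPositive (toeplitzOf c)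

theorem Tuple.sort_comp_eq_inv {r T : ℕ} {g : Fin r → Fin T} (hg : StrictMono g)
    (σ : Equiv.Perm (Fin r)) : Tuple.sort (g ∘ σ) = σ⁻¹ := by
  have hcomp : (g ∘ σ) ∘ ⇑σ⁻¹ = g := by ext i; simp
  symm
  rw [Tuple.eq_sort_iff, hcomp]
  exact ⟨hg.monotone, fun i j hij h => absurd (hg.injective h) (by simpa using hij.ne)⟩

namespace Matrix

variable {R : Type*} [CommRing R] {r T : ℕ}

theorem det_mul_eq_sum_det_submatrix_mul (A : Matrix (Fin r) (Fin T) R)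
    (B : Matrix (Fin T) (Fin r) R) :
    (A * B).det = ∑ p : Fin r → Fin T, (∏ i, B (p i) i) * (A.submatrix id p).det := by
  simp only [det_apply', mul_apply, prod_univ_sum, mul_sum, Fintype.piFinset_univ]
  rw [sum_comm]
  refine sum_congr rfl fun p _ => sum_congr rfl fun σ _ => ?_
  simp only [prod_mul_distrib, submatrix_apply, id]
  ring

theorem det_mul_eq_sum_strictMono (A : Matrix (Fin r) (Fin T) R)
    (B : Matrix (Fin T) (Fin r) R) :
    (A * B).det = ∑ g : Fin r → Fin T with StrictMono g,
      (A.submatrix id g).det * (B.submatrix g id).det := by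
  set F : (Fin r → Fin T) → R := fun p => (∏ i, B (p i) i) * (A.submatrix id p).det
  have hnoninj : ∀ p, ¬ Function.Injective p → F p = 0 := fun p hp => by
    obtain ⟨i, j, hij, hne⟩ := Function.not_injective_iff.1 hp
    simp only [F]
    rw [det_zero_of_column_eq hne fun k => by simp [hij], mul_zero]
  calc (A * B).det = ∑ p : Fin r → Fin T with Function.Injective p, F p := by
        rw [det_mul_eq_sum_det_submatrix_mul,
          sum_filter_of_ne fun p _ h => by_contra fun hp => h (hnoninj p hp)]
    _ = ∑ x ∈ ({g : Fin r → Fin T | StrictMono g} : Finset _) ×ˢ univ,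
          F (x.1 ∘ ⇑(x.2 : Equiv.Perm (Fin r))) := by
        refine sum_nbij' (fun p => (p ∘ Tuple.sort p, (Tuple.sort p)⁻¹)) (fun x => x.1 ∘ x.2)
          ?_ ?_ ?_ ?_ ?_
        · intro p hp
          simp only [mem_filter_univ, mem_product, mem_univ, and_true] at hp ⊢
          exact (Tuple.monotone_sort p).strictMono_of_injective (hp.comp (Tuple.sort p).injective)
        · intro x hx
          simp only [mem_filter_univ, mem_product, mem_univ, and_true] at hx ⊢
          exact hx.injective.comp x.2.injective
        · intro p _
          ext i; simp
        · rintro ⟨g, σ⟩ hx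
          simp only [mem_filter_univ, mem_product, mem_univ, and_true] at hx
          simp [Tuple.sort_comp_eq_inv hx, Function.comp_assoc]
        · intro p _
          simp [Function.comp_assoc]
    _ = ∑ g : Fin r → Fin T with StrictMono g,
          (A.submatrix id g).det * (B.submatrix g id).det := by
        rw [sum_product]
        refine sum_congr rfl fun g _ => ?_
        have hperm : ∀ σ : Equiv.Perm (Fin r), (A.submatrix id (g ∘ σ)).det
            = Equiv.Perm.sign σ * (A.submatrix id g).det := fun σ =>
          det_permute' σ (A.submatrix id g)
        simp only [F, hperm, det_apply' (B.submatrix g id), mul_sum, submatrix_apply, id]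
        refine sum_congr rfl fun σ _ => ?_
        simp only [Function.comp_apply]
        ring

end Matrix

/-- The product `A * B` of infinite matrices, for `A` lower triangular. -/
def lowerMul (A B : ℕ → ℕ → ℝ) : ℕ → ℕ → ℝ :=
  fun n k => ∑ j ∈ range (n + 1), A n j * B j k

/-- The block diagonal matrix `1 ⊕ Q`. -/
def oneOplus (Q : ℕ → ℕ → ℝ) : ℕ → ℕ → ℝ := fun n k =>
  if n = 0 then if k = 0 then 1 else 0 else if k = 0 then 0 else Q (n - 1) (k - 1)

def truncCols (K : ℕ) (M : ℕ → ℕ → ℝ) : ℕ → ℕ → ℝ := fun n k => if k < K then M n k else 0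

lemma toeplitzOf_eq_zero_of_lt (c : ℕ → ℝ) {n j : ℕ} (h : n < j) : toeplitzOf c n j = 0 :=
  if_neg h.not_ge

lemma lowerMul_truncCols (A B : ℕ → ℕ → ℝ) (K : ℕ) :
    lowerMul A (truncCols K B) = truncCols K (lowerMul A B) := by
  ext n k
  by_cases hk : k < K <;> simp [lowerMul, truncCols, hk]

lemma oneOplus_truncCols (Q : ℕ → ℕ → ℝ) (K : ℕ) :
    oneOplus (truncCols K Q) = truncCols (K + 1) (oneOplus Q) := by
  ext n k
  simp only [oneOplus, truncCols]
  split_ifs <;> first | rfl | omega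

lemma StrictMono.pred_of_pos {r : ℕ} {s : Fin r → ℕ} (hs : StrictMono s) (hpos : ∀ a, 0 < s a) :
    StrictMono fun a => s a - 1 := fun a b hab => by
  have := hs hab
  have := hpos a
  dsimp only
  omega

namespace IsTotallyPositive

lemma truncCols_zero (M : ℕ → ℕ → ℝ) : IsTotallyPositive (truncCols 0 M) := by
  rintro (_ | r) rows cols - -
  · simp
  · rw [Matrix.det_eq_zero_of_column_eq_zero 0 fun a => by simp [truncCols]]

lemma of_truncCols {M : ℕ → ℕ → ℝ} (h : ∀ K, IsTotallyPositive (truncCols K M)) :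
    IsTotallyPositive M := by
  intro r rows cols hrows hcols
  have hlt : ∀ b, cols b < univ.sup cols + 1 := fun b =>
    Nat.lt_succ_of_le (le_sup (mem_univ b))
  simpa [truncCols, hlt] using h (univ.sup cols + 1) r rows cols hrows hcols

lemma lowerMul {A B : ℕ → ℕ → ℝ} (hA : IsTotallyPositive A) (hAlow : ∀ n j, n < j → A n j = 0)
    (hB : IsTotallyPositive B) : IsTotallyPositive (lowerMul A B) := by
  intro r rows cols hrows hcols
  set T := univ.sup rows + 1
  have hfactor : (Matrix.of fun a b => _root_.lowerMul A B (rows a) (cols b))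
      = (Matrix.of fun (a : Fin r) (t : Fin T) => A (rows a) t)
        * Matrix.of fun (t : Fin T) b => B t (cols b) := by
    ext a b
    have hle : rows a + 1 ≤ T := Nat.succ_le_succ (le_sup (mem_univ a))
    simp only [Matrix.mul_apply, Matrix.of_apply, _root_.lowerMul]
    rw [Fin.sum_univ_eq_sum_range (fun j => A (rows a) j * B j (cols b)) T]
    refine sum_subset (range_subset_range.2 hle) fun j _ hj => ?_
    rw [hAlow _ _ (by simpa using hj), zero_mul]
  rw [hfactor, Matrix.det_mul_eq_sum_strictMono]
  refine sum_nonneg fun g hg => ?_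
  have hg' : StrictMono fun a => (g a : ℕ) :=
    Fin.val_strictMono.comp ((mem_filter_univ g).1 hg)
  exact mul_nonneg (hA r rows _ hrows hg') (hB r _ cols hg' hcols)

lemma oneOplus {Q : ℕ → ℕ → ℝ} (hQ : IsTotallyPositive Q) : IsTotallyPositive (oneOplus Q) := by
  have hpos : ∀ {r} (rows cols : Fin r → ℕ), StrictMono rows → StrictMono cols →
      (∀ a, 0 < rows a) → (∀ b, 0 < cols b) →
      0 ≤ (Matrix.of fun a b => _root_.oneOplus Q (rows a) (cols b)).det := by
    intro r rows cols hrows hcols hr hc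
    have hshift : (Matrix.of fun a b => _root_.oneOplus Q (rows a) (cols b))
        = Matrix.of fun a b => Q (rows a - 1) (cols b - 1) := by
      ext a b
      simp [_root_.oneOplus, (hr a).ne', (hc b).ne']
    rw [hshift]
    exact hQ r _ _ (hrows.pred_of_pos hr) (hcols.pred_of_pos hc)
  rintro (_ | m) rows cols hrows hcols
  · simp
  have hrows_pos : ∀ a, rows 0 < rows (Fin.succ a) := fun a => hrows a.succ_pos
  have hcols_pos : ∀ b, cols 0 < cols (Fin.succ b) := fun b => hcols b.succ_pos
  by_cases hc0 : cols 0 = 0 <;> by_cases hr0 : rows 0 = 0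
  · -- the first row and column are those of the identity
    rw [Matrix.det_succ_column_zero, sum_eq_single 0]
    · simp only [Matrix.of_apply, _root_.oneOplus, hr0, hc0, Fin.succAbove_zero, Fin.val_zero,
        pow_zero, ↓reduceIte, one_mul]
      exact hpos _ _ (hrows.comp Fin.strictMono_succ) (hcols.comp Fin.strictMono_succ)
        (fun a => hr0 ▸ hrows_pos a) (fun b => hc0 ▸ hcols_pos b)
    · intro i _ hi
      obtain ⟨a, rfl⟩ := Fin.exists_succ_eq.2 hi
      simp [_root_.oneOplus, hc0, (hr0 ▸ hrows_pos a).ne']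
    · simp
  · rw [Matrix.det_eq_zero_of_column_eq_zero 0 fun a => by
      simp [_root_.oneOplus, hc0,
        ((Nat.pos_of_ne_zero hr0).trans_le (hrows.monotone a.zero_le)).ne']]
  · rw [Matrix.det_eq_zero_of_row_eq_zero 0 fun b => by
      simp [_root_.oneOplus, hr0,
        ((Nat.pos_of_ne_zero hc0).trans_le (hcols.monotone b.zero_le)).ne']]
  · exact hpos rows cols hrows hcols
      (fun a => (Nat.pos_of_ne_zero hr0).trans_le (hrows.monotone a.zero_le))
      (fun b => (Nat.pos_of_ne_zero hc0).trans_le (hcols.monotone b.zero_le))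

end IsTotallyPositive

lemma coeff_mk_mul_eq_sum_toeplitzOf (c : ℕ → ℝ) (B : ℝ⟦X⟧) (n : ℕ) :
    coeff n (PowerSeries.mk c * B) = ∑ j ∈ range (n + 1), toeplitzOf c n j * coeff j B := by
  rw [mul_comm, coeff_mul,
    Nat.sum_antidiagonal_eq_sum_range_succ fun i j => coeff i B * coeff j (PowerSeries.mk c)]
  refine sum_congr rfl fun j hj => ?_
  rw [toeplitzOf, if_pos (Nat.lt_succ_iff.1 (mem_range.1 hj)), coeff_mk, mul_comm]

noncomputable def prodMatrix (a : ℕ → ℕ → ℝ) : ℕ → ℕ → ℝ :=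
  fun n k => coeff n (∏ s ∈ range k, X * PowerSeries.mk (a s))

lemma prodMatrix_eq_oneOplus (a : ℕ → ℕ → ℝ) :
    prodMatrix a = oneOplus (lowerMul (toeplitzOf (a 0)) (prodMatrix fun s => a (s + 1))) := by
  ext n k
  rcases k with _ | k <;> rcases n with _ | n
  · simp [prodMatrix, oneOplus]
  · simp [prodMatrix, oneOplus]
  · simp [prodMatrix, oneOplus]
  · rw [prodMatrix, prod_range_succ', mul_comm, mul_assoc, coeff_succ_X_mul,
      coeff_mk_mul_eq_sum_toeplitzOf]
    simp [oneOplus, lowerMul, prodMatrix]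

theorem isTotallyPositive_prodMatrix {a : ℕ → ℕ → ℝ} (ha : ∀ s, IsPolyaFrequency (a s)) :
    IsTotallyPositive (prodMatrix a) := by
  -- the first `K` columns of `prodMatrix a` only involve `a 0, …, a (K - 1)`
  refine .of_truncCols fun K => ?_
  induction K generalizing a with
  | zero => exact .truncCols_zero _
  | succ K ih =>
    rw [prodMatrix_eq_oneOplus, ← oneOplus_truncCols, ← lowerMul_truncCols]
    exact (IsTotallyPositive.lowerMul (ha 0) (fun _ _ => toeplitzOf_eq_zero_of_lt _)
      (ih fun s => ha (s + 1))).oneOplus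

lemma prod_range_mod {M : Type*} [CommMonoid M] (w : ℕ → M) {ℓ : ℕ} (hℓ : 0 < ℓ) (k : ℕ) :
    ∏ s ∈ range k, w (s % ℓ) = (∏ i ∈ range (k % ℓ), w i) * (∏ i ∈ range ℓ, w i) ^ (k / ℓ) := by
  have hshift : ∀ q m, m ≤ ℓ → ∏ i ∈ range m, w ((ℓ * q + i) % ℓ) = ∏ i ∈ range m, w i :=
    fun q m hm => prod_congr rfl fun i hi => by
      rw [Nat.mul_add_mod, Nat.mod_eq_of_lt ((mem_range.1 hi).trans_le hm)]
  have hblocks : ∀ q, ∏ s ∈ range (ℓ * q), w (s % ℓ) = (∏ i ∈ range ℓ, w i) ^ q := by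
    intro q
    induction q with
    | zero => simp
    | succ q ih => rw [Nat.mul_succ, prod_range_add, ih, hshift q ℓ le_rfl, pow_succ]
  conv_lhs => rw [← Nat.div_add_mod k ℓ]
  rw [prod_range_add, hblocks, hshift _ _ (Nat.mod_lt k hℓ).le, mul_comm]

lemma mrEntry_expand {K : Type*} [CommRing K] {ℓ : ℕ} (hℓ : ℓ ≠ 0) {g G : K⟦X⟧}
    {f F : ℕ → K⟦X⟧} (hg : g = expand ℓ hℓ G) (hf : ∀ i < ℓ, f i = X * expand ℓ hℓ (F i))
    (m k : ℕ) : mrEntry ℓ g f (ℓ * m + k) k = coeff m (G * ∏ s ∈ range k, F (s % ℓ)) := by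
  have hprod : ∏ s ∈ range k, f (s % ℓ) = X ^ k * expand ℓ hℓ (∏ s ∈ range k, F (s % ℓ)) := by
    rw [prod_congr rfl fun s _ => hf _ (Nat.mod_lt s (Nat.pos_of_ne_zero hℓ)),
      prod_mul_distrib, prod_const, card_range, map_prod]
  rw [mrEntry, mul_assoc, ← prod_range_mod _ (Nat.pos_of_ne_zero hℓ), hprod, hg, mul_left_comm,
    ← map_mul, coeff_X_pow_mul, coeff_expand_mul]

lemma eq_expand_of_coeff_eq_zero {K : Type*} [CommRing K] {ℓ : ℕ} (hℓ : ℓ ≠ 0) {g : K⟦X⟧}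
    (hg : ∀ n, ¬ ℓ ∣ n → coeff n g = 0) :
    g = expand ℓ hℓ (PowerSeries.mk fun k => coeff (ℓ * k) g) := by
  ext n
  rw [coeff_expand]
  split_ifs with h
  · rw [coeff_mk, Nat.mul_div_cancel' h]
  · exact hg n h

lemma eq_X_mul_expand_of_coeff_eq_zero {K : Type*} [CommRing K] {ℓ : ℕ} (hℓ : 2 ≤ ℓ)
    {f : K⟦X⟧} (hf : ∀ n, n % ℓ ≠ 1 → coeff n f = 0) :
    f = X * expand ℓ (by omega) (PowerSeries.mk fun k => coeff (ℓ * k + 1) f) := by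
  ext (_ | n)
  · rw [coeff_zero_X_mul]
    exact hf 0 (by simp)
  · rw [coeff_succ_X_mul, coeff_expand]
    split_ifs with h
    · rw [coeff_mk, Nat.mul_div_cancel' h]
    · refine hf _ fun hmod => h ⟨(n + 1) / ℓ, ?_⟩
      have := Nat.div_add_mod (n + 1) ℓ
      omega

lemma compression_index {ℓ n k : ℕ} (hℓ : ℓ ≠ 0) (hk : k ≤ n) :
    n * ℓ - (ℓ - 1) * k = ℓ * (n - k) + k := by
  obtain ⟨m, rfl⟩ := Nat.exists_eq_add_of_le hk
  obtain ⟨e, rfl⟩ := Nat.exists_eq_add_one_of_ne_zero hℓ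
  simp only [Nat.add_sub_cancel, Nat.add_sub_cancel_left]
  exact Nat.sub_eq_of_eq_add (by ring)

lemma compression_eq_lowerMul {ℓ : ℕ} (hℓ : ℓ ≠ 0) {g : ℝ⟦X⟧} {f : ℕ → ℝ⟦X⟧} {G : ℕ → ℝ}
    {F : ℕ → ℕ → ℝ} (hg : g = expand ℓ hℓ (PowerSeries.mk G))
    (hf : ∀ i < ℓ, f i = X * expand ℓ hℓ (PowerSeries.mk (F i))) (n k : ℕ) :
    (if k ≤ n then mrEntry ℓ g f (n * ℓ - (ℓ - 1) * k) k else 0)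
      = lowerMul (toeplitzOf G) (prodMatrix fun s => F (s % ℓ)) n k := by
  simp only [lowerMul, prodMatrix]
  rw [← coeff_mk_mul_eq_sum_toeplitzOf, prod_mul_distrib, prod_const, card_range, mul_left_comm,
    coeff_X_pow_mul']
  split_ifs with hk
  · rw [compression_index hℓ hk, mrEntry_expand hℓ hg hf]
  · rfl

theorem stmt19_general (ℓ : ℕ) (hℓ : 2 ≤ ℓ)
    (g : ℝ⟦X⟧) (f : ℕ → ℝ⟦X⟧)
    (hg : ∀ n, ¬ (ℓ ∣ n) → coeff n g = 0)
    (hf : ∀ i < ℓ, ∀ n, n % ℓ ≠ 1 → coeff n (f i) = 0)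
    (d : ℕ → ℕ → ℝ) (hd : ∀ n k, d n k = mrEntry ℓ g f n k)
    (dhat : ℕ → ℕ → ℝ)
    (hdhat : ∀ n k, dhat n k = if k ≤ n then d (n * ℓ - (ℓ - 1) * k) k else 0)
    (hgPF : IsPolyaFrequency fun k => coeff (ℓ * k) g)
    (hfPF : ∀ i < ℓ, IsPolyaFrequency fun k => coeff (ℓ * k + 1) (f i)) :
    IsTotallyPositive dhat := by
  have hℓ0 : ℓ ≠ 0 := by omega
  have hfactor : dhat = lowerMul (toeplitzOf fun k => coeff (ℓ * k) g)
      (prodMatrix fun s k => coeff (ℓ * k + 1) (f (s % ℓ))) := by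
    ext n k
    rw [hdhat, hd, compression_eq_lowerMul hℓ0 (eq_expand_of_coeff_eq_zero hℓ0 hg)
      fun i hi => eq_X_mul_expand_of_coeff_eq_zero hℓ (hf i hi)]
  rw [hfactor]
  exact IsTotallyPositive.lowerMul hgPF (fun _ _ => toeplitzOf_eq_zero_of_lt _)
    (isTotallyPositive_prodMatrix fun s => hfPF _ (Nat.mod_lt s (by omega)))

/-- If the coefficient sequences of `ĝ` and of the `f̂_i` are Pólya frequency sequences,
then the compression of the multiple Riordan array `(g; f_0, …, f_{ℓ-1})` is totally
positive. -/
theorem stmt19 (ℓ : ℕ) (hℓ : 2 ≤ ℓ)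
    (g : ℝ⟦X⟧) (f : ℕ → ℝ⟦X⟧)
    (hg : ∀ n, ¬ (ℓ ∣ n) → coeff n g = 0) (hg0 : constantCoeff g ≠ 0)
    (hf : ∀ i < ℓ, ∀ n, n % ℓ ≠ 1 → coeff n (f i) = 0)
    (hf1 : ∀ i < ℓ, coeff 1 (f i) ≠ 0)
    (d : ℕ → ℕ → ℝ) (hd : ∀ n k, d n k = mrEntry ℓ g f n k)
    (dhat : ℕ → ℕ → ℝ)
    (hdhat : ∀ n k, dhat n k = if k ≤ n then d (n * ℓ - (ℓ - 1) * k) k else 0)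
    (hgPF : IsPolyaFrequency fun k => coeff (ℓ * k) g)
    (hfPF : ∀ i < ℓ, IsPolyaFrequency fun k => coeff (ℓ * k + 1) (f i)) :
    IsTotallyPositive dhat :=
  stmt19_general ℓ hℓ g f hg hf d hd dhat hdhat hgPF hfPF
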